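/- Let ζ ∈ [0,1), k₀ = √((1−ζ)/(1+ζ)), and Φ(ζ,k) = i(k² + k₀²)/(k(1+k₀²)). For every real u, Re Φ(ζ, k₀ + u e^{iπ/4}) = −u²(2k₀ + √2 u) / (2(k₀² + 1)(k₀² + √2 k₀ u + u²)). -/

import Mathlib

open Complex

/-!
Since `k₀²/k = k₀² k̄/|k|²`, the real part of `i(k² + k₀²)/(k(1 + k₀²))` is
`Im k · (k₀² − |k|²)/((1 + k₀²)|k|²)`. On the ray `k = k₀ + u(1 + i)/√2` one has `Im k = u/√2`
and `|k|² = k₀² + √2 k₀ u + u²`, so `k₀² − |k|² = −u(√2 k₀ + u)`.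
-/

/-- The stationary point `k₀(ζ) = √((1−ζ)/(1+ζ))`. -/
noncomputable def kzero (ζ : ℝ) : ℝ := Real.sqrt ((1 - ζ) / (1 + ζ))

/-- The sine-Gordon phase function in the form `Φ(ζ,k) = i(k² + k₀²)/(k(1+k₀²))`. -/
noncomputable def Phi (ζ : ℝ) (k : ℂ) : ℂ :=
  Complex.I * (k ^ 2 + ((kzero ζ : ℝ) : ℂ) ^ 2) / (k * (1 + ((kzero ζ : ℝ) : ℂ) ^ 2))

theorem re_I_mul_sq_add_sq_div (a : ℝ) (z : ℂ) :
    (I * (z ^ 2 + (a : ℂ) ^ 2) / (z * (1 + (a : ℂ) ^ 2))).re =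
      z.im * (a ^ 2 - normSq z) / ((1 + a ^ 2) * normSq z) := by
  rcases eq_or_ne z 0 with rfl | hz
  · simp
  have hN : normSq z ≠ 0 := normSq_eq_zero.not.mpr hz
  have ha : (1 + a ^ 2) ≠ 0 := by positivity
  rw [div_re, normSq_mul]
  simp only [mul_re, mul_im, add_re, add_im, I_re, I_im, one_re, one_im, sq, ofReal_re, ofReal_im,
    normSq_apply] at *
  field_simp
  ring

theorem re_I_mul_sq_add_sq_div_diagonal_ray (a u : ℝ) :
    (I * (((a : ℂ) + u * ((1 + I) / (Real.sqrt 2 : ℝ))) ^ 2 + (a : ℂ) ^ 2) /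
        (((a : ℂ) + u * ((1 + I) / (Real.sqrt 2 : ℝ))) * (1 + (a : ℂ) ^ 2))).re =
      -(u ^ 2 * (2 * a + Real.sqrt 2 * u)) /
        (2 * (a ^ 2 + 1) * (a ^ 2 + Real.sqrt 2 * a * u + u ^ 2)) := by
  set k : ℂ := (a : ℂ) + u * ((1 + I) / (Real.sqrt 2 : ℝ))
  have hs : Real.sqrt 2 ^ 2 = 2 := Real.sq_sqrt zero_le_two
  have hs0 : Real.sqrt 2 ≠ 0 := by positivity
  have hre : k.re = a + u / Real.sqrt 2 := by simp [k, ← div_eq_mul_inv]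
  have him : k.im = u / Real.sqrt 2 := by simp [k, ← div_eq_mul_inv]
  have hN : normSq k = a ^ 2 + Real.sqrt 2 * a * u + u ^ 2 := by
    rw [normSq_apply, hre, him]
    field_simp
    linear_combination (-(a * Real.sqrt 2 * u + u ^ 2)) * hs
  have hnum : u / Real.sqrt 2 * (a ^ 2 - normSq k) * 2 = -(u ^ 2 * (2 * a + Real.sqrt 2 * u)) := by
    rw [hN]
    field_simp
    linear_combination u ^ 3 * hs
  rw [re_I_mul_sq_add_sq_div, him, ← hnum, ← hN, ← mul_div_mul_right _ _ two_ne_zero]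
  ring

theorem stmt3_general (ζ : ℝ) (u : ℝ) :
    (Phi ζ (((kzero ζ : ℝ) : ℂ) + (u : ℂ) * ((1 + Complex.I) / (Real.sqrt 2 : ℝ)))).re =
      -(u ^ 2 * (2 * kzero ζ + Real.sqrt 2 * u)) /
        (2 * (kzero ζ ^ 2 + 1) * (kzero ζ ^ 2 + Real.sqrt 2 * kzero ζ * u + u ^ 2)) := by
  exact re_I_mul_sq_add_sq_div_diagonal_ray (kzero ζ) u

/-- `Re Φ` along the steepest-descent ray from `k₀` at angle `π/4`. -/
theorem stmt3 (ζ : ℝ) (hζ : ζ ∈ Set.Ico (0 : ℝ) 1) (u : ℝ) :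
    (Phi ζ (((kzero ζ : ℝ) : ℂ) + (u : ℂ) * ((1 + Complex.I) / (Real.sqrt 2 : ℝ)))).re =
      -(u ^ 2 * (2 * kzero ζ + Real.sqrt 2 * u)) /
        (2 * (kzero ζ ^ 2 + 1) * (kzero ζ ^ 2 + Real.sqrt 2 * kzero ζ * u + u ^ 2)) :=
  stmt3_general ζ u
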